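/- Let A be a feasible tree solution and F a feasible solution with V[A]=V[F]. If e,f ∈ A are compatible, then e is essential if and only if f is essential. Moreover, any two unsafe edges of A are compatible, so the set S_u of all unsafe edges of A forms a single equivalence class of ~cp. Consequently, every equivalence class S of ~cp consists either entirely of essential edges or entirely of inessential edges, and every class S ≠ S_u consists only of safe edges. -/

import Mathlib

open Finset

attribute [local instance] Classical.propDecidable

variable {V : Type*} [Fintype V] [DecidableEq V]

/-- The simple graph on `V` induced by a finite set of (undirected) edges. -/
def graphOf (F : Finset (Sym2 V)) : SimpleGraph V where
  Adj u v := u ≠ v ∧ s(u, v) ∈ F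
  symm := by
    constructor
    intro u v h
    refine ⟨Ne.symm h.1, ?_⟩
    rw [Sym2.eq_swap]
    exact h.2
  loopless := by constructor; intro v h; exact h.1 rfl

/-- The set of vertices incident to at least one edge of `F` (denoted `V[F]` in the paper). -/
def supp (F : Finset (Sym2 V)) : Set V := {v | ∃ e ∈ F, v ∈ e}

/-- A Steiner forest `F` is feasible for the terminal pairs `T` if it connects every pair. -/
def Feasible (F : Finset (Sym2 V)) (T : Finset (V × V)) : Prop :=
  ∀ p ∈ T, (graphOf F).Reachable p.1 p.2

/-- Total edge cost `d(F)`. -/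
def cost (d : Sym2 V → ℝ) (F : Finset (Sym2 V)) : ℝ := ∑ e ∈ F, d e

/-- `A` is a tree (on its vertex support): loopless edges, acyclic, connected on `V[A]`. -/
def IsTreeSol (A : Finset (Sym2 V)) : Prop :=
  (∀ e ∈ A, ¬ e.IsDiag) ∧ (graphOf A).IsAcyclic ∧
    ∀ u ∈ supp A, ∀ v ∈ supp A, (graphOf A).Reachable u v

/-- Shortest-path distance between `u` and `v` in the graph with edge set `Eall`
and edge lengths `d`. -/
noncomputable def wdist (Eall : Finset (Sym2 V)) (d : Sym2 V → ℝ) (u v : V) : ℝ :=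
  ⨅ p : (graphOf Eall).Walk u v, (p.edges.map d).sum

/-- Width of a vertex set `W`: the largest shortest-path distance of a terminal pair
whose two members both lie in `W`. -/
noncomputable def widthSet (Eall : Finset (Sym2 V)) (d : Sym2 V → ℝ) (T : Finset (V × V))
    (W : Set V) : ℝ :=
  sSup {x : ℝ | ∃ p ∈ T, p.1 ∈ W ∧ p.2 ∈ W ∧ x = wdist Eall d p.1 p.2}

/-- Total width `w(F)`: the sum of the widths of the connected components of `F`. -/
noncomputable def totalWidth (Eall : Finset (Sym2 V)) (d : Sym2 V → ℝ) (T : Finset (V × V))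
    (F : Finset (Sym2 V)) : ℝ :=
  ∑ᶠ c : (graphOf F).ConnectedComponent, widthSet Eall d T c.supp

/-- The potential `φ(F) = d(F) + w(F)`. -/
noncomputable def phi (Eall : Finset (Sym2 V)) (d : Sym2 V → ℝ) (T : Finset (V × V))
    (F : Finset (Sym2 V)) : ℝ :=
  cost d F + totalWidth Eall d T F

/-- Some edge of `F` leaves the vertex set `W`. -/
def leavesSet (F : Finset (Sym2 V)) (W : Set V) : Prop :=
  ∃ g ∈ F, ∃ x y : V, g = s(x, y) ∧ x ∈ W ∧ y ∉ W

/-- `T_{e,f}`: the connected component of `A ∖ {e,f}` containing the interior of the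
unique `e`–`f` path of the tree `A`; equivalently, the component containing an endpoint
of `e` together with an endpoint of `f`. -/
def midComp (A : Finset (Sym2 V)) (e f : Sym2 V) : Set V :=
  {v | ∃ x ∈ e, ∃ y ∈ f,
    (graphOf (A \ {e, f})).Reachable x y ∧ (graphOf (A \ {e, f})).Reachable x v}

/-- `e` and `f` are compatible w.r.t. `F` (`e ~cp f`). -/
def Compatible (A F : Finset (Sym2 V)) (e f : Sym2 V) : Prop :=
  e = f ∨ ¬ leavesSet F (midComp A e f)

/-- `e` is safe: some `F`-edge crosses between the two components of `A ∖ {e}`. -/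
def Safe (A F : Finset (Sym2 V)) (e : Sym2 V) : Prop :=
  ∃ g ∈ F, ∃ x y : V, g = s(x, y) ∧ x ≠ y ∧ ¬ (graphOf (A.erase e)).Reachable x y

/-- `e` is essential: removing it from `A` destroys feasibility. -/
def Essential (A : Finset (Sym2 V)) (T : Finset (V × V)) (e : Sym2 V) : Prop :=
  ¬ Feasible (A.erase e) T

/-- The compatibility class of the edge `e` of `A`. -/
noncomputable def cls (A F : Finset (Sym2 V)) (e : Sym2 V) : Finset (Sym2 V) :=
  A.filter (fun f => Compatible A F e f)

/-- `S_u`: the set of unsafe edges of `A`. -/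
noncomputable def unsafeCls (A F : Finset (Sym2 V)) : Finset (Sym2 V) :=
  A.filter (fun e => ¬ Safe A F e)

/-- `𝔖`: the set of compatibility classes of edges of `A`. -/
noncomputable def classes (A F : Finset (Sym2 V)) : Finset (Finset (Sym2 V)) :=
  A.image (cls A F)

/-- `e` lies on the fundamental cycle closed by adding the edge `f` to the tree `A`. -/
def onFundCycle (A : Finset (Sym2 V)) (f e : Sym2 V) : Prop :=
  e ∈ A ∧ ∀ x y : V, f = s(x, y) →
    (graphOf A).Reachable x y ∧ ¬ (graphOf (A.erase e)).Reachable x y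

/-- Edge/edge swap optimality of `A` w.r.t. added edges from `Eadd` and objective `obj`:
no swap that adds an edge `f ∈ Eadd` and removes one edge of the cycle it closes,
keeping feasibility, strictly decreases the objective. -/
def EdgeEdgeSwapOptimal (Eadd : Finset (Sym2 V)) (T : Finset (V × V))
    (obj : Finset (Sym2 V) → ℝ) (A : Finset (Sym2 V)) : Prop :=
  ∀ f ∈ Eadd, ∀ e, onFundCycle A f e →
    Feasible (A.erase e ∪ {f}) T → obj A ≤ obj (A.erase e ∪ {f})

/-- Edge/set swap optimality of `A` w.r.t. added edges from `Eadd` and objective `obj`: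
no swap that adds an edge `f ∈ Eadd` and removes a set `S` of edges of the cycle it closes,
keeping feasibility, strictly decreases the objective. -/
def EdgeSetSwapOptimal (Eadd : Finset (Sym2 V)) (T : Finset (V × V))
    (obj : Finset (Sym2 V) → ℝ) (A : Finset (Sym2 V)) : Prop :=
  ∀ f ∈ Eadd, ∀ S ⊆ A, (∀ e ∈ S, onFundCycle A f e) →
    Feasible ((A \ S) ∪ {f}) T → obj A ≤ obj ((A \ S) ∪ {f})

/-- Removing swap optimality: deleting any (feasibility preserving) edge set from `A`
does not strictly decrease the objective. -/
def RemovingSwapOptimal (T : Finset (V × V))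
    (obj : Finset (Sym2 V) → ℝ) (A : Finset (Sym2 V)) : Prop :=
  ∀ S ⊆ A, Feasible (A \ S) T → obj A ≤ obj (A \ S)

/-- Path/set swap optimality of `A`: for vertices `u, v` in the same component of `A`,
adding a set `P ⊆ Eadd` of edges (along a `u`–`v` connection) and removing a set `S` of
edges of the component of `u`, in a way that keeps `u,v` connected and the solution
feasible, does not strictly decrease the objective. -/
def PathSetSwapOptimal (Eadd : Finset (Sym2 V)) (T : Finset (V × V))
    (obj : Finset (Sym2 V) → ℝ) (A : Finset (Sym2 V)) : Prop :=
  ∀ u v : V, (graphOf A).Reachable u v →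
    ∀ P : Finset (Sym2 V), P ⊆ Eadd → ∀ S ⊆ A,
      (∀ e ∈ S, ∃ x ∈ e, (graphOf A).Reachable u x) →
      (graphOf ((A \ S) ∪ P)).Reachable u v →
      Feasible ((A \ S) ∪ P) T → obj A ≤ obj ((A \ S) ∪ P)

/-- A connected component `c` of `A ∖ S` is an *inner* component for the class `S`
if it touches (at least) two distinct edges of `S`. -/
def innerComp (A S : Finset (Sym2 V)) (c : (graphOf (A \ S)).ConnectedComponent) : Prop :=
  ∃ e ∈ S, ∃ e' ∈ S, e ≠ e' ∧ (∃ x ∈ e, (graphOf (A \ S)).connectedComponentMk x = c) ∧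
    ∃ y ∈ e', (graphOf (A \ S)).connectedComponentMk y = c

/-- The sum of the widths of the inner components `E_{S,i}`, `i ∈ In_S`, of the class `S`. -/
noncomputable def innerWidthSum (Eall : Finset (Sym2 V)) (d : Sym2 V → ℝ) (T : Finset (V × V))
    (A S : Finset (Sym2 V)) : ℝ :=
  ∑ᶠ c : (graphOf (A \ S)).ConnectedComponent,
    if innerComp A S c then widthSet Eall d T c.supp else 0

/-- `index(E')` for a vertex set `W`: the largest index `i` (in the enumeration `tp` of the
terminal pairs by nondecreasing distance) of a terminal pair lying entirely inside `W`. -/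
noncomputable def idxOf {nt : ℕ} (tp : Fin nt → V × V) (W : Set V) : ℕ :=
  sSup {i : ℕ | ∃ h : i < nt, (tp ⟨i, h⟩).1 ∈ W ∧ (tp ⟨i, h⟩).2 ∈ W}

/-- The finite vertex support of an edge set. -/
def suppF (B : Finset (Sym2 V)) : Finset V :=
  Finset.univ.filter (fun v => ∃ e ∈ B, v ∈ e)

/-- `e` crosses between two different connected components of `A`. -/
def crossingEdge (A : Finset (Sym2 V)) (e : Sym2 V) : Prop :=
  ∀ x y : V, e = s(x, y) → ¬ (graphOf A).Reachable x y

/-- The components of `A` touched by the edge set `B`, i.e. the nodes of `G_A`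
incident to `B`. -/
noncomputable def touched (A B : Finset (Sym2 V)) :
    Finset ((graphOf A).ConnectedComponent) :=
  (suppF B).image ((graphOf A).connectedComponentMk)

/-- `B` is (the edge set of) a tree in the contracted multigraph `G_A`: all its edges cross
between components of `A`, it is connected (through the components of `A` it touches), and
it has one edge less than the number of components it touches. -/
def IsGATree (A B : Finset (Sym2 V)) : Prop :=
  (∀ e ∈ B, crossingEdge A e) ∧ (touched A B).card = B.card + 1 ∧
    ∀ x ∈ suppF B, ∀ y ∈ suppF B, (graphOf (A ∪ B)).Reachable x y

/-- `A` is `c`-approximate connecting move optimal: for every tree `B` in `G_A` (with edges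
taken from `Emoves`), the total width of the components it connects, minus the largest of
these widths, is at most `c` times the length of the tree. -/
def ConnApproxOptimal (Emoves Eall : Finset (Sym2 V)) (d : Sym2 V → ℝ) (T : Finset (V × V))
    (c : ℝ) (A : Finset (Sym2 V)) : Prop :=
  ∀ B ⊆ Emoves, IsGATree A B →
    (∑ t ∈ touched A B, widthSet Eall d T t.supp)
      - (⨆ t ∈ touched A B, widthSet Eall d T t.supp) ≤ c * ∑ e ∈ B, d e

/-!
Orient two distinct tree edges `e = ab`, `f = cd` so that `b` and `c` lie in the same component
`M = T_{e,f}` of `A ∖ {e, f}`; the other two components are those of `a` and of `d`. Removing `e`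
from `A` merges `M` with `d`'s component, removing `f` merges it with `a`'s. Compatibility says
that `M` is closed under `F`-edges, hence under `F`-connectivity, and unsafety of an edge says that
every `F`-edge stays inside one component of `A` minus that edge. Each claim then reduces to a
short case analysis on which of the three components the endpoints of an `F`-edge (or of a
terminal pair) lie in.
-/

section

variable {V : Type*}

lemma graphOf_mono {B C : Finset (Sym2 V)} (h : B ⊆ C) : graphOf B ≤ graphOf C :=
  fun _ _ hxy => ⟨hxy.1, h hxy.2⟩

lemma mem_iff_mem_of_not_leavesSet {F : Finset (Sym2 V)} {W : Set V}
    (hW : ¬ leavesSet F W) {x y : V} (hxy : s(x, y) ∈ F) : x ∈ W ↔ y ∈ W := by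
  constructor
  · exact fun hx => by_contra fun hy => hW ⟨_, hxy, x, y, rfl, hx, hy⟩
  · exact fun hy => by_contra fun hx => hW ⟨_, hxy, y, x, Sym2.eq_swap, hy, hx⟩

lemma mem_iff_mem_of_reachable {F : Finset (Sym2 V)} {W : Set V}
    (hW : ¬ leavesSet F W) {x y : V} (h : (graphOf F).Reachable x y) : x ∈ W ↔ y ∈ W := by
  obtain ⟨w⟩ := h
  induction w with
  | nil => exact .rfl
  | cons hadj _ ih => exact (mem_iff_mem_of_not_leavesSet hW hadj.2).trans ih

variable [DecidableEq V]

lemma graphOf_erase (B : Finset (Sym2 V)) (g : Sym2 V) :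
    graphOf (B.erase g) = (graphOf B).deleteEdges {g} := by
  ext u v
  simp only [graphOf, SimpleGraph.deleteEdges_adj, Finset.mem_erase, Set.mem_singleton_iff]
  tauto

lemma graphOf_reachable_of_mem {B : Finset (Sym2 V)} {u v : V} (h : s(u, v) ∈ B) :
    (graphOf B).Reachable u v := by
  by_cases huv : u = v
  · exact huv ▸ .refl u
  · exact SimpleGraph.Adj.reachable ⟨huv, h⟩

lemma sdiff_pair_eq_erase_erase (A : Finset (Sym2 V)) (e f : Sym2 V) :
    A \ {e, f} = (A.erase e).erase f := by
  rw [Finset.sdiff_insert, Finset.sdiff_singleton_eq_erase, Finset.erase_right_comm]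

lemma sdiff_pair_subset_erase_left (A : Finset (Sym2 V)) (e f : Sym2 V) :
    A \ {e, f} ⊆ A.erase e := by
  rw [sdiff_pair_eq_erase_erase]
  exact Finset.erase_subset _ _

lemma sdiff_pair_subset_erase_right (A : Finset (Sym2 V)) (e f : Sym2 V) :
    A \ {e, f} ⊆ A.erase f := by
  rw [Finset.pair_comm]
  exact sdiff_pair_subset_erase_left A f e

/-- A walk from `x` that uses `g` reaches an endpoint of `g` before using it. -/
lemma reachable_erase_or_exists {B : Finset (Sym2 V)} {g : Sym2 V} {x y : V}
    (h : (graphOf B).Reachable x y) :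
    (graphOf (B.erase g)).Reachable x y ∨ ∃ z ∈ g, (graphOf (B.erase g)).Reachable x z := by
  obtain ⟨w⟩ := h
  induction w with
  | nil => exact .inl .rfl
  | @cons x w y hxw _ ih =>
    by_cases hg : s(x, w) = g
    · exact .inr ⟨x, hg ▸ Sym2.mem_mk_left x w, .rfl⟩
    · have hxw' : (graphOf (B.erase g)).Reachable x w :=
        SimpleGraph.Adj.reachable ⟨hxw.1, Finset.mem_erase.2 ⟨hg, hxw.2⟩⟩
      rcases ih with hwy | ⟨z, hz, hwz⟩
      · exact .inl (hxw'.trans hwy)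
      · exact .inr ⟨z, hz, hxw'.trans hwz⟩

lemma exists_mem_reachable_erase {B : Finset (Sym2 V)} {g : Sym2 V} {x z : V}
    (h : (graphOf B).Reachable x z) (hz : z ∈ g) :
    ∃ y ∈ g, (graphOf (B.erase g)).Reachable x y :=
  (reachable_erase_or_exists h).elim (fun h' => ⟨z, hz, h'⟩) id

lemma IsTreeSol.not_reachable_erase {A : Finset (Sym2 V)} (hA : IsTreeSol A) {a b : V}
    (hab : s(a, b) ∈ A) : ¬ (graphOf (A.erase s(a, b))).Reachable a b := by
  have hne : a ≠ b := fun h => hA.1 _ hab (Sym2.mk_isDiag_iff.2 h)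
  have hbridge := SimpleGraph.isAcyclic_iff_forall_adj_isBridge.1 hA.2.1 ⟨hne, hab⟩
  rwa [SimpleGraph.isBridge_iff, ← graphOf_erase] at hbridge

lemma reachable_erase_of_not_safe {A F : Finset (Sym2 V)} {e : Sym2 V} (he : ¬ Safe A F e)
    {x y : V} (hxy : s(x, y) ∈ F) : (graphOf (A.erase e)).Reachable x y := by
  by_contra h
  exact he ⟨_, hxy, x, y, rfl, fun hxy' => h (hxy' ▸ .rfl), h⟩

lemma midComp_comm (A : Finset (Sym2 V)) (e f : Sym2 V) : midComp A f e = midComp A e f := by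
  ext v
  simp only [midComp, Finset.pair_comm f e]
  constructor <;> rintro ⟨x, hx, y, hy, hxy, hxv⟩ <;>
    exact ⟨y, hy, x, hx, hxy.symm, hxy.symm.trans hxv⟩

lemma Compatible.symm {A F : Finset (Sym2 V)} {e f : Sym2 V} (h : Compatible A F e f) :
    Compatible A F f e := by
  rw [Compatible, midComp_comm]
  exact h.imp Eq.symm id

/-- The edges `e = ab` and `f = cd` of the tree `A`, oriented so that the tree path between them
runs from `b` to `c`. -/
structure OrientedEdgePair (A : Finset (Sym2 V)) (e f : Sym2 V) (a b c d : V) : Prop where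
  tree : IsTreeSol A
  left_mem : e ∈ A
  right_mem : f ∈ A
  ne : e ≠ f
  left_eq : e = s(a, b)
  right_eq : f = s(c, d)
  reachable : (graphOf (A \ {e, f})).Reachable b c

lemma exists_orientedEdgePair {A : Finset (Sym2 V)} {e f : Sym2 V} (hA : IsTreeSol A)
    (he : e ∈ A) (hf : f ∈ A) (hef : e ≠ f) :
    ∃ a b c d, OrientedEdgePair A e f a b c d := by
  cases e with | h a₀ b₀
  cases f with | h c₀ d₀
  have hc₀a₀ : (graphOf A).Reachable c₀ a₀ :=
    hA.2.2 c₀ ⟨_, hf, Sym2.mem_mk_left _ _⟩ a₀ ⟨_, he, Sym2.mem_mk_left _ _⟩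
  obtain ⟨b, hb, hc₀b⟩ := exists_mem_reachable_erase hc₀a₀ (Sym2.mem_mk_left _ _)
  obtain ⟨c, hc, hbc⟩ := exists_mem_reachable_erase hc₀b.symm (Sym2.mem_mk_left c₀ _)
  obtain ⟨a, hab⟩ := Sym2.mem_iff_exists.1 hb
  obtain ⟨d, hcd⟩ := Sym2.mem_iff_exists.1 hc
  exact ⟨a, b, c, d, hA, he, hf, hef, hab.trans Sym2.eq_swap, hcd,
    (sdiff_pair_eq_erase_erase A _ _).symm ▸ hbc⟩

namespace OrientedEdgePair

variable {A F : Finset (Sym2 V)} {e f : Sym2 V} {a b c d x y : V}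

lemma symm (h : OrientedEdgePair A e f a b c d) : OrientedEdgePair A f e d c b a where
  tree := h.tree
  left_mem := h.right_mem
  right_mem := h.left_mem
  ne := h.ne.symm
  left_eq := h.right_eq.trans Sym2.eq_swap
  right_eq := h.left_eq.trans Sym2.eq_swap
  reachable := Finset.pair_comm e f ▸ h.reachable.symm

lemma reachable_erase_left_of_mem_right (h : OrientedEdgePair A e f a b c d) (hz : x ∈ f) :
    (graphOf (A.erase e)).Reachable b x := by
  have hbc := h.reachable.mono (graphOf_mono (sdiff_pair_subset_erase_left A e f))
  have hcd : (graphOf (A.erase e)).Reachable c d :=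
    graphOf_reachable_of_mem (h.right_eq ▸ Finset.mem_erase.2 ⟨h.ne.symm, h.right_mem⟩)
  rcases Sym2.mem_iff.1 (h.right_eq ▸ hz) with rfl | rfl
  · exact hbc
  · exact hbc.trans hcd

lemma not_reachable_sdiff_left_of_mem_right (h : OrientedEdgePair A e f a b c d) (hz : x ∈ f) :
    ¬ (graphOf (A \ {e, f})).Reachable a x := fun hax =>
  h.tree.not_reachable_erase (h.left_eq ▸ h.left_mem) <| h.left_eq ▸
    (hax.mono (graphOf_mono (sdiff_pair_subset_erase_left A e f))).trans
      (h.reachable_erase_left_of_mem_right hz).symm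

lemma midComp_eq (h : OrientedEdgePair A e f a b c d) :
    midComp A e f = {z | (graphOf (A \ {e, f})).Reachable b z} := by
  ext z
  constructor
  · rintro ⟨x, hx, y, hy, hxy, hxz⟩
    rcases Sym2.mem_iff.1 (h.left_eq ▸ hx) with rfl | rfl
    · exact absurd hxy (h.not_reachable_sdiff_left_of_mem_right hy)
    · exact hxz
  · exact fun hz => ⟨b, h.left_eq ▸ Sym2.mem_mk_right a b, c,
      h.right_eq ▸ Sym2.mem_mk_left c d, h.reachable, hz⟩

lemma reachable_or_reachable_right_of_not_mem (h : OrientedEdgePair A e f a b c d)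
    (hxy : (graphOf (A.erase e)).Reachable x y) (hx : x ∉ midComp A e f) :
    (graphOf (A \ {e, f})).Reachable x y ∨ (graphOf (A \ {e, f})).Reachable x d := by
  rw [sdiff_pair_eq_erase_erase]
  rw [h.midComp_eq, sdiff_pair_eq_erase_erase] at hx
  rcases reachable_erase_or_exists (g := f) hxy with hxy' | ⟨z, hz, hxz⟩
  · exact .inl hxy'
  · rcases Sym2.mem_iff.1 (h.right_eq ▸ hz) with rfl | rfl
    · exact absurd ((sdiff_pair_eq_erase_erase A e f ▸ h.reachable).trans hxz.symm) hx
    · exact .inr hxz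

lemma reachable_sdiff_of_not_mem (h : OrientedEdgePair A e f a b c d)
    (hxy : (graphOf (A.erase e)).Reachable x y) (hx : x ∉ midComp A e f)
    (hy : y ∉ midComp A e f) : (graphOf (A \ {e, f})).Reachable x y := by
  rcases h.reachable_or_reachable_right_of_not_mem hxy hx with hxy' | hxd
  · exact hxy'
  rcases h.reachable_or_reachable_right_of_not_mem hxy.symm hy with hyx | hyd
  · exact hyx.symm
  · exact hxd.trans hyd.symm

lemma reachable_sdiff_right_of_mem_of_not_mem (h : OrientedEdgePair A e f a b c d)
    (hxy : (graphOf (A.erase e)).Reachable x y) (hx : x ∈ midComp A e f)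
    (hy : y ∉ midComp A e f) : (graphOf (A \ {e, f})).Reachable y d := by
  rcases h.reachable_or_reachable_right_of_not_mem hxy.symm hy with hyx | hyd
  · rw [h.midComp_eq] at hx hy
    exact absurd (hx.trans hyx.symm) hy
  · exact hyd

lemma reachable_sdiff_of_mem (h : OrientedEdgePair A e f a b c d) (hx : x ∈ midComp A e f)
    (hy : y ∈ midComp A e f) : (graphOf (A \ {e, f})).Reachable x y := by
  rw [h.midComp_eq] at hx hy
  exact hx.symm.trans hy

lemma feasible_erase_left (h : OrientedEdgePair A e f a b c d) {T : Finset (V × V)}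
    (hF : Feasible F T) (hM : ¬ leavesSet F (midComp A e f)) (hf : Feasible (A.erase f) T) :
    Feasible (A.erase e) T := by
  intro p hp
  have hmem := mem_iff_mem_of_reachable hM (hF p hp)
  refine SimpleGraph.Reachable.mono (graphOf_mono (sdiff_pair_subset_erase_left A e f)) ?_
  by_cases h₁ : p.1 ∈ midComp A e f
  · exact h.reachable_sdiff_of_mem h₁ (hmem.1 h₁)
  · have h₂ : p.2 ∉ midComp A e f := hmem.not.1 h₁
    rw [← midComp_comm] at h₁ h₂
    exact Finset.pair_comm f e ▸ h.symm.reachable_sdiff_of_not_mem (hf p hp) h₁ h₂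

lemma not_leavesSet_of_not_safe (h : OrientedEdgePair A e f a b c d) (he : ¬ Safe A F e)
    (hf : ¬ Safe A F f) : ¬ leavesSet F (midComp A e f) := by
  rintro ⟨g, hg, x, y, rfl, hx, hy⟩
  have hyd := h.reachable_sdiff_right_of_mem_of_not_mem (reachable_erase_of_not_safe he hg) hx hy
  rw [← midComp_comm] at hx hy
  have hya := h.symm.reachable_sdiff_right_of_mem_of_not_mem
    (reachable_erase_of_not_safe hf hg) hx hy
  rw [Finset.pair_comm] at hya
  exact h.not_reachable_sdiff_left_of_mem_right (h.right_eq ▸ Sym2.mem_mk_right c d)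
    (hya.symm.trans hyd)

lemma not_safe_right (h : OrientedEdgePair A e f a b c d) (hM : ¬ leavesSet F (midComp A e f))
    (he : ¬ Safe A F e) : ¬ Safe A F f := by
  rintro ⟨g, hg, x, y, rfl, -, hxy⟩
  apply hxy
  refine SimpleGraph.Reachable.mono (graphOf_mono (sdiff_pair_subset_erase_right A e f)) ?_
  have hmem := mem_iff_mem_of_not_leavesSet hM hg
  by_cases hx : x ∈ midComp A e f
  · exact h.reachable_sdiff_of_mem hx (hmem.1 hx)
  · exact h.reachable_sdiff_of_not_mem (reachable_erase_of_not_safe he hg) hx (hmem.not.1 hx)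

end OrientedEdgePair

variable {T : Finset (V × V)} {A F : Finset (Sym2 V)} {e f : Sym2 V}

lemma essential_iff_of_compatible (hF : Feasible F T) (hA : IsTreeSol A) (he : e ∈ A)
    (hf : f ∈ A) (hef : Compatible A F e f) : Essential A T e ↔ Essential A T f := by
  rcases eq_or_ne e f with rfl | hne
  · rfl
  obtain ⟨a, b, c, d, h⟩ := exists_orientedEdgePair hA he hf hne
  have hM := hef.resolve_left hne
  exact not_congr ⟨h.symm.feasible_erase_left hF (midComp_comm A e f ▸ hM),
    h.feasible_erase_left hF hM⟩

lemma compatible_of_not_safe (hA : IsTreeSol A) (he : e ∈ A) (hf : f ∈ A)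
    (hue : ¬ Safe A F e) (huf : ¬ Safe A F f) : Compatible A F e f := by
  rcases eq_or_ne e f with rfl | hne
  · exact .inl rfl
  obtain ⟨a, b, c, d, h⟩ := exists_orientedEdgePair hA he hf hne
  exact .inr (h.not_leavesSet_of_not_safe hue huf)

lemma not_safe_of_compatible (hA : IsTreeSol A) (he : e ∈ A) (hf : f ∈ A)
    (hef : Compatible A F e f) (hue : ¬ Safe A F e) : ¬ Safe A F f := by
  rcases eq_or_ne e f with rfl | hne
  · exact hue
  obtain ⟨a, b, c, d, h⟩ := exists_orientedEdgePair hA he hf hne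
  exact h.not_safe_right (hef.resolve_left hne) hue

lemma cls_eq_unsafeCls (hA : IsTreeSol A) (he : e ∈ A) (hue : ¬ Safe A F e) :
    cls A F e = unsafeCls A F := by
  ext f
  simp only [cls, unsafeCls, Finset.mem_filter, and_congr_right_iff]
  exact fun hf => ⟨fun hef => not_safe_of_compatible hA he hf hef hue,
    compatible_of_not_safe hA he hf hue⟩

end

theorem stmt5_classification_general
    (T : Finset (V × V)) (A F : Finset (Sym2 V))
    (hFfeas : Feasible F T)
    (hAtree : IsTreeSol A) :
    (∀ e ∈ A, ∀ f ∈ A, Compatible A F e f → (Essential A T e ↔ Essential A T f)) ∧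
    (∀ e ∈ A, ∀ f ∈ A, ¬ Safe A F e → ¬ Safe A F f → Compatible A F e f) ∧
    (∀ e ∈ A, ¬ Safe A F e → cls A F e = unsafeCls A F) ∧
    (∀ e ∈ A, (∀ f ∈ cls A F e, Essential A T f) ∨ ∀ f ∈ cls A F e, ¬ Essential A T f) ∧
    (∀ e ∈ A, cls A F e ≠ unsafeCls A F → ∀ f ∈ cls A F e, Safe A F f) := by
  have essential_iff e (he : e ∈ A) f (hf : f ∈ cls A F e) :
      Essential A T e ↔ Essential A T f :=
    essential_iff_of_compatible hFfeas hAtree he (Finset.mem_filter.1 hf).1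
      (Finset.mem_filter.1 hf).2
  refine ⟨fun e he f hf => essential_iff_of_compatible hFfeas hAtree he hf,
    fun e he f hf => compatible_of_not_safe hAtree he hf,
    fun e he => cls_eq_unsafeCls hAtree he, fun e he => ?_, fun e he hne f hf => ?_⟩
  · by_cases hE : Essential A T e
    · exact .inl fun f hf => (essential_iff e he f hf).1 hE
    · exact .inr fun f hf => (essential_iff e he f hf).not.1 hE
  · obtain ⟨hfA, hef⟩ := Finset.mem_filter.1 hf
    by_contra huf
    exact hne (cls_eq_unsafeCls hAtree he (not_safe_of_compatible hAtree hfA he hef.symm huf))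

theorem stmt5_classification
    (T : Finset (V × V)) (A F : Finset (Sym2 V))
    (hAfeas : Feasible A T) (hFfeas : Feasible F T)
    (hAtree : IsTreeSol A) (hsupp : supp A = supp F) :
    (∀ e ∈ A, ∀ f ∈ A, Compatible A F e f → (Essential A T e ↔ Essential A T f)) ∧
    (∀ e ∈ A, ∀ f ∈ A, ¬ Safe A F e → ¬ Safe A F f → Compatible A F e f) ∧
    (∀ e ∈ A, ¬ Safe A F e → cls A F e = unsafeCls A F) ∧
    (∀ e ∈ A, (∀ f ∈ cls A F e, Essential A T f) ∨ ∀ f ∈ cls A F e, ¬ Essential A T f) ∧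
    (∀ e ∈ A, cls A F e ≠ unsafeCls A F → ∀ f ∈ cls A F e, Safe A F f) :=
  stmt5_classification_general T A F hFfeas hAtree
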